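/- Let μ be a probability law on ℝ satisfying Assumption (A) with constants γ ≥ 1, C₁, C₂ ∈ (0,∞). Then there exist constants C₁', C₂' ∈ (0,∞) such that for every m ∈ ℕ, every differentiable convex function f : ℝ^m → ℝ, every a ∈ ℝ and all t, c ∈ (0,∞): P(f(η) < a − t) · P(f(η) > a and |∇f(η)| ≤ c) ≤ C₁' exp(−(t/c)^γ / C₂'), where η = (η₁,…,η_m) are i.i.d. random variables with law μ and |∇f(η)| denotes the Euclidean norm of the gradient of f at η. -/

import Mathlib

open MeasureTheory

noncomputable section

/-- Assumption (A): concentration inequality for convex `1`-Lipschitz (Euclidean norm)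
functions of i.i.d. random variables with marginal law `μ`. -/
def AssumptionA (μ : Measure ℝ) (γ C₁ C₂ : ℝ) : Prop :=
  ∀ n : ℕ, ∀ f : (Fin n → ℝ) → ℝ, ConvexOn ℝ Set.univ f →
    (∀ x y : Fin n → ℝ, |f x - f y| ≤ Real.sqrt (∑ i, (x i - y i) ^ 2)) →
    ∀ t : ℝ, 0 < t →
      (Measure.pi fun _ : Fin n => μ)
          {x | t ≤ |f x - ∫ y, f y ∂(Measure.pi fun _ : Fin n => μ)|}
        ≤ ENNReal.ofReal (C₁ * Real.exp (-C₂ * t ^ γ))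

/-
Let `B = {f < a - t}`, a convex set, and let `h` be the Euclidean distance to `B`: a convex
1-Lipschitz function vanishing on `B`. By the tangent-plane inequality and Cauchy–Schwarz,
`h ≥ t / c` wherever `f > a` and `‖∇f‖ ≤ c`. Whatever the mean `M` of `h` is, one of the two
events lies in `{|h - M| ≥ t / (2c)}`, whose probability Assumption (A) bounds.
-/

open Metric Set

lemma convexOn_infDist {E : Type*} [NormedAddCommGroup E] [NormedSpace ℝ E] {s : Set E}
    (hs : Convex ℝ s) : ConvexOn ℝ univ fun x => infDist x s := by
  rcases s.eq_empty_or_nonempty with rfl | hne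
  · simpa only [infDist_empty] using convexOn_const (0 : ℝ) convex_univ
  refine ⟨convex_univ, fun x _ y _ p q hp hq hpq => le_of_forall_pos_le_add fun ε hε => ?_⟩
  obtain ⟨u, hu, hxu⟩ := (infDist_lt_iff hne).mp (lt_add_of_pos_right (infDist x s) hε)
  obtain ⟨v, hv, hyv⟩ := (infDist_lt_iff hne).mp (lt_add_of_pos_right (infDist y s) hε)
  calc infDist (p • x + q • y) s
      ≤ dist (p • x + q • y) (p • u + q • v) := infDist_le_dist_of_mem (hs hu hv hp hq hpq)
    _ ≤ p * dist x u + q * dist y v := by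
        refine (dist_add_add_le _ _ _ _).trans_eq ?_
        rw [dist_smul₀, dist_smul₀, Real.norm_of_nonneg hp, Real.norm_of_nonneg hq]
    _ ≤ p * (infDist x s + ε) + q * (infDist y s + ε) := by gcongr
    _ = p • infDist x s + q • infDist y s + ε := by
        rw [smul_eq_mul, smul_eq_mul]; linear_combination ε * hpq

lemma ConvexOn.add_fderiv_sub_le {E : Type*} [NormedAddCommGroup E] [NormedSpace ℝ E]
    {f : E → ℝ} (hf : ConvexOn ℝ univ f) {x : E} (hfx : DifferentiableAt ℝ f x) (y : E) :
    f x + fderiv ℝ f x (y - x) ≤ f y := by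
  let line : ℝ →ᵃ[ℝ] E := AffineMap.lineMap x y
  have hconv : ConvexOn ℝ univ (f ∘ line) := hf.comp_affineMap line
  have hderiv : HasDerivAt (f ∘ line) (fderiv ℝ f x (y - x)) 0 := by
    have hline : HasDerivAt line (y - x) 0 := AffineMap.hasDerivAt_lineMap
    have hfx' : HasFDerivAt f (fderiv ℝ f x) (line 0) := by
      simpa [line] using hfx.hasFDerivAt
    exact hfx'.comp_hasDerivAt 0 hline
  have := hconv.le_slope_of_hasDerivAt (mem_univ 0) (mem_univ 1) one_pos hderiv
  simp only [slope_def_field, Function.comp_apply, line, AffineMap.lineMap_apply_zero,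
    AffineMap.lineMap_apply_one, sub_zero, div_one] at this
  linarith

lemma ContinuousLinearMap.apply_le_sqrt_sum_sq_mul {ι : Type*} [Fintype ι] [DecidableEq ι]
    (L : (ι → ℝ) →L[ℝ] ℝ) (v : ι → ℝ) :
    L v ≤ √(∑ i, L (Pi.single i 1) ^ 2) * √(∑ i, v i ^ 2) := by
  have hL : L v = ∑ i, L (Pi.single i 1) * v i := by
    rw [← L.coe_coe, L.toLinearMap.pi_apply_eq_sum_univ v]
    refine Finset.sum_congr rfl fun i _ => ?_
    rw [smul_eq_mul, mul_comm]
    congr 2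
    ext j
    simp [Pi.single_apply, eq_comm]
  rw [hL]
  exact Real.sum_mul_le_sqrt_mul_sqrt _ _ _

lemma ConvexOn.sub_le_sqrt_sum_sq_fderiv_mul {ι : Type*} [Fintype ι] [DecidableEq ι]
    {f : (ι → ℝ) → ℝ} (hf : ConvexOn ℝ univ f) {x : ι → ℝ} (hfx : DifferentiableAt ℝ f x)
    (y : ι → ℝ) :
    f x - f y ≤ √(∑ i, fderiv ℝ f x (Pi.single i 1) ^ 2) * √(∑ i, (x i - y i) ^ 2) := by
  have htangent := hf.add_fderiv_sub_le hfx y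
  have hneg : fderiv ℝ f x (y - x) = -fderiv ℝ f x (x - y) := by
    rw [← map_neg, neg_sub]
  have hCS := (fderiv ℝ f x).apply_le_sqrt_sum_sq_mul (x - y)
  simp only [Pi.sub_apply] at hCS
  linarith

section EuclideanInfDist

variable {ι : Type*} [Fintype ι]

lemma dist_toLp_toLp (x y : ι → ℝ) :
    dist (WithLp.toLp 2 x) (WithLp.toLp 2 y) = √(∑ i, (x i - y i) ^ 2) := by
  simp [EuclideanSpace.dist_eq, Real.dist_eq, sq_abs]

-- `ι → ℝ` carries the sup norm, hence the detour through `EuclideanSpace`.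
def euclideanInfDist (s : Set (ι → ℝ)) (x : ι → ℝ) : ℝ :=
  infDist (WithLp.toLp 2 x : EuclideanSpace ℝ ι) (WithLp.toLp 2 '' s)

lemma convexOn_euclideanInfDist {s : Set (ι → ℝ)} (hs : Convex ℝ s) :
    ConvexOn ℝ univ (euclideanInfDist s) := by
  let toLp : (ι → ℝ) →ₗ[ℝ] EuclideanSpace ℝ ι := (WithLp.linearEquiv 2 ℝ (ι → ℝ)).symm
  exact (convexOn_infDist (hs.linear_image toLp)).comp_linearMap toLp

lemma abs_euclideanInfDist_sub_le (s : Set (ι → ℝ)) (x y : ι → ℝ) :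
    |euclideanInfDist s x - euclideanInfDist s y| ≤ √(∑ i, (x i - y i) ^ 2) := by
  rw [← dist_toLp_toLp, ← Real.dist_eq]
  simpa [euclideanInfDist] using (lipschitz_infDist_pt (WithLp.toLp 2 '' s)).dist_le_mul
    (WithLp.toLp 2 x : EuclideanSpace ℝ ι) (WithLp.toLp 2 y)

lemma euclideanInfDist_of_mem {s : Set (ι → ℝ)} {x : ι → ℝ} (hx : x ∈ s) :
    euclideanInfDist s x = 0 :=
  infDist_zero_of_mem (mem_image_of_mem _ hx)

lemma ConvexOn.div_le_euclideanInfDist [DecidableEq ι] {f : (ι → ℝ) → ℝ}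
    (hf : ConvexOn ℝ univ f) {x : ι → ℝ} (hfx : DifferentiableAt ℝ f x) {s : Set (ι → ℝ)}
    (hs : s.Nonempty) {t c : ℝ} (hc : 0 < c) (hgrad : √(∑ i, fderiv ℝ f x (Pi.single i 1) ^ 2) ≤ c)
    (hgap : ∀ y ∈ s, f y + t ≤ f x) :
    t / c ≤ euclideanInfDist s x := by
  refine (le_infDist (hs.image _)).mpr ?_
  rintro _ ⟨y, hy, rfl⟩
  rw [dist_toLp_toLp, div_le_iff₀ hc]
  calc t ≤ f x - f y := by linarith [hgap y hy]
    _ ≤ √(∑ i, fderiv ℝ f x (Pi.single i 1) ^ 2) * √(∑ i, (x i - y i) ^ 2) :=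
        hf.sub_le_sqrt_sum_sq_fderiv_mul hfx y
    _ ≤ √(∑ i, (x i - y i) ^ 2) * c := by rw [mul_comm]; gcongr

end EuclideanInfDist

lemma measure_mul_measure_le_of_separated {Ω : Type*} [MeasurableSpace Ω] (P : Measure Ω)
    [IsProbabilityMeasure P] {S T : Set Ω} {h : Ω → ℝ} {u δ : ℝ} (hS : ∀ x ∈ S, h x ≤ u)
    (hT : ∀ x ∈ T, u + 2 * δ ≤ h x) (M : ℝ) :
    P S * P T ≤ P {x | δ ≤ |h x - M|} := by
  rcases le_or_gt M (u + δ) with hM | hM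
  · refine (mul_le_mul' prob_le_one (measure_mono fun x hx => ?_)).trans_eq (one_mul _)
    have := hT x hx
    exact le_abs.mpr (Or.inl (show δ ≤ h x - M by linarith))
  · refine (mul_le_mul' (measure_mono fun x hx => ?_) prob_le_one).trans_eq (mul_one _)
    have := hS x hx
    exact le_abs.mpr (Or.inr (show δ ≤ -(h x - M) by linarith))

theorem concentration_of_convex_functions
    (μ : Measure ℝ) [IsProbabilityMeasure μ]
    (γ C₁ C₂ : ℝ) (hC₁ : 0 < C₁) (hC₂ : 0 < C₂)
    (hA : AssumptionA μ γ C₁ C₂) :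
    ∃ C₁' C₂' : ℝ, 0 < C₁' ∧ 0 < C₂' ∧
      ∀ m : ℕ, ∀ f : (Fin m → ℝ) → ℝ, Differentiable ℝ f → ConvexOn ℝ Set.univ f →
        ∀ a t c : ℝ, 0 < t → 0 < c →
          (Measure.pi fun _ : Fin m => μ) {x | f x < a - t} *
            (Measure.pi fun _ : Fin m => μ)
              {x | a < f x ∧
                Real.sqrt (∑ i, (fderiv ℝ f x (Pi.single i 1)) ^ 2) ≤ c}
          ≤ ENNReal.ofReal (C₁' * Real.exp (-((t / c) ^ γ) / C₂')) := by
  refine ⟨C₁, 2 ^ γ / C₂, hC₁, by positivity, fun m f hf hconv a t c ht hc => ?_⟩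
  set B := {x : Fin m → ℝ | f x < a - t}
  rcases B.eq_empty_or_nonempty with hB | hB
  · simp [B, hB]
  have hBconv : Convex ℝ B := by simpa using hconv.convex_lt (a - t)
  have hfar : ∀ x ∈ {x | a < f x ∧ √(∑ i, fderiv ℝ f x (Pi.single i 1) ^ 2) ≤ c},
      0 + 2 * (t / c / 2) ≤ euclideanInfDist B x := fun x hx => by
    rw [zero_add, mul_div_cancel₀ _ two_ne_zero]
    exact hconv.div_le_euclideanInfDist (hf x) hB hc hx.2 fun y hy => by linarith [hx.1, hy.out]
  calc _ ≤ (Measure.pi fun _ : Fin m => μ) {x | t / c / 2 ≤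
          |euclideanInfDist B x - ∫ y, euclideanInfDist B y ∂(Measure.pi fun _ : Fin m => μ)|} :=
        measure_mul_measure_le_of_separated _ (fun x hx => (euclideanInfDist_of_mem hx).le) hfar _
    _ ≤ ENNReal.ofReal (C₁ * Real.exp (-C₂ * (t / c / 2) ^ γ)) :=
        hA m _ (convexOn_euclideanInfDist hBconv) (abs_euclideanInfDist_sub_le B) _ (by positivity)
    _ = ENNReal.ofReal (C₁ * Real.exp (-((t / c) ^ γ) / (2 ^ γ / C₂))) := by
        rw [Real.div_rpow (by positivity) zero_le_two]
        field_simp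

end
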